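/- Let f be a continuous positive density on ℝ that is decreasing-increasing: there is x₀ ∈ ℝ such that f is nonincreasing on (−∞, x₀] and nondecreasing on [x₀, +∞). Then for every V > 0 an isoperimetric region of volume V exists, and every isoperimetric region of volume V is a bounded open interval whose closure contains a point where f attains its global minimum. -/

import Mathlib

/-!
An open set of finite weighted volume and finite perimeter has finitely many frontier points; it
lies between the extreme ones `u < w`, and its perimeter is at least `f u + f w`, plus at least
`min f` more unless the set is the interval `(u, w)`. Because `f` decreases up to `x₀` and
increases after it, `[u, w]` contains an interval of the same volume `V` with `x₀` in its closure
and no heavier endpoints. Intervals of volume `V` with `x₀` in their closure form a compact family,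
so one of them minimises the endpoint sum `f α + f β`; it is therefore isoperimetric. A minimizer
must then be an interval, and if `x₀` lies outside its closure, comparing it with the interval of
volume `V` that starts (or ends) at `x₀` shows that its endpoint nearer to `x₀` minimises `f`.
-/

open Filter MeasureTheory Set

noncomputable def wvol (f : ℝ → ℝ) (Ω : Set ℝ) : ENNReal :=
  ∫⁻ x in Ω, ENNReal.ofReal (f x)

noncomputable def wper (f : ℝ → ℝ) (Ω : Set ℝ) : ENNReal :=
  ∑' x : frontier Ω, ENNReal.ofReal (f x)

def IsIsopRegion (f : ℝ → ℝ) (Ω : Set ℝ) (V : ENNReal) : Prop :=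
  IsOpen Ω ∧ wvol f Ω = V ∧
    ∀ U : Set ℝ, IsOpen U → wvol f U = V → wper f Ω ≤ wper f U

lemma IsPreconnected.subset_of_disjoint_frontier {X : Type*} [TopologicalSpace X]
    {s U : Set X} (hs : IsPreconnected s) (hU : IsOpen U) (hfr : Disjoint s (frontier U))
    (hne : (s ∩ U).Nonempty) : s ⊆ U :=
  hs.subset_of_closure_inter_subset hU hne fun x ⟨hxU, hxs⟩ => by
    by_contra hx
    exact hfr.notMem_of_mem_left hxs ⟨hxU, hU.interior_eq.symm ▸ hx⟩

section LowerBound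

variable {f : ℝ → ℝ} {m : ℝ} {U : Set ℝ}

lemma wvol_mono (f : ℝ → ℝ) {U W : Set ℝ} (h : U ⊆ W) : wvol f U ≤ wvol f W :=
  lintegral_mono_set h

lemma wvol_empty (f : ℝ → ℝ) : wvol f ∅ = 0 := by
  rw [wvol, Measure.restrict_empty, lintegral_zero_measure]

lemma nonempty_of_wvol_eq {V : ℝ} (hV : 0 < V) (hvol : wvol f U = ENNReal.ofReal V) :
    U.Nonempty :=
  nonempty_iff_ne_empty.mpr fun hU =>
    (ENNReal.ofReal_pos.mpr hV).ne (by rw [← hvol, hU, wvol_empty])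

lemma wvol_eq_top (hm : 0 < m) (hfm : ∀ x, m ≤ f x) {s : Set ℝ} (hs : volume s = ⊤) :
    wvol f s = ⊤ := by
  refine top_le_iff.mp ?_
  calc ⊤ = ∫⁻ _ in s, ENNReal.ofReal m := by
        rw [setLIntegral_const, hs, ENNReal.mul_top (ENNReal.ofReal_pos.mpr hm).ne']
    _ ≤ wvol f s := lintegral_mono fun x => ENNReal.ofReal_le_ofReal (hfm x)

lemma sum_le_wper (f : ℝ → ℝ) (s : Finset ℝ) (hs : ↑s ⊆ frontier U) :
    ∑ x ∈ s, ENNReal.ofReal (f x) ≤ wper f U :=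
  (Finset.tsum_subtype' s fun x => ENNReal.ofReal (f x)).symm.trans_le
    (ENNReal.tsum_mono_subtype (fun x => ENNReal.ofReal (f x)) hs)

lemma wper_Ioo (hnn : ∀ x, 0 ≤ f x) {a b : ℝ} (hab : a < b) :
    wper f (Ioo a b) = ENNReal.ofReal (f a + f b) := by
  rw [wper, frontier_Ioo hab, ← Finset.coe_pair,
    Finset.tsum_subtype' _ fun x => ENNReal.ofReal (f x), Finset.sum_pair hab.ne,
    ENNReal.ofReal_add (hnn a) (hnn b)]

lemma finite_frontier_of_wper_ne_top (hm : 0 < m) (hfm : ∀ x, m ≤ f x)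
    (hper : wper f U ≠ ⊤) : (frontier U).Finite := by
  by_contra hinf
  have : Infinite (frontier U) := (Set.not_finite.mp hinf).to_subtype
  refine hper (top_le_iff.mp ?_)
  calc ⊤ = ∑' _ : frontier U, ENNReal.ofReal m :=
        (ENNReal.tsum_const_eq_top_of_ne_zero (ENNReal.ofReal_pos.mpr hm).ne').symm
    _ ≤ wper f U := ENNReal.tsum_le_tsum fun x => ENNReal.ofReal_le_ofReal (hfm x)

lemma exists_mem_frontier_lt (hm : 0 < m) (hfm : ∀ x, m ≤ f x) (hU : IsOpen U)
    (hvol : wvol f U ≠ ⊤) {x : ℝ} (hx : x ∈ U) : ∃ z ∈ frontier U, z < x := by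
  by_contra! h
  have hsub : Iic x ⊆ U := isPreconnected_Iic.subset_of_disjoint_frontier hU
    (disjoint_left.mpr fun z hz hzU => (disjoint_frontier_iff_isOpen.mpr hU).notMem_of_mem_left hzU
      (le_antisymm hz (h z hzU) ▸ hx)) ⟨x, self_mem_Iic, hx⟩
  exact hvol (top_le_iff.mp (wvol_eq_top hm hfm Real.volume_Iic ▸ wvol_mono f hsub))

lemma exists_mem_frontier_gt (hm : 0 < m) (hfm : ∀ x, m ≤ f x) (hU : IsOpen U)
    (hvol : wvol f U ≠ ⊤) {x : ℝ} (hx : x ∈ U) : ∃ z ∈ frontier U, x < z := by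
  by_contra! h
  have hsub : Ici x ⊆ U := isPreconnected_Ici.subset_of_disjoint_frontier hU
    (disjoint_left.mpr fun z hz hzU => (disjoint_frontier_iff_isOpen.mpr hU).notMem_of_mem_left hzU
      (le_antisymm (h z hzU) hz ▸ hx)) ⟨x, self_mem_Ici, hx⟩
  exact hvol (top_le_iff.mp (wvol_eq_top hm hfm Real.volume_Ici ▸ wvol_mono f hsub))

lemma exists_mem_frontier_subset_Ioo (hm : 0 < m) (hfm : ∀ x, m ≤ f x) (hU : IsOpen U)
    (hne : U.Nonempty) (hvol : wvol f U ≠ ⊤) (hper : wper f U ≠ ⊤) :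
    ∃ u ∈ frontier U, ∃ w ∈ frontier U, U ⊆ Ioo u w := by
  have hfin := finite_frontier_of_wper_ne_top hm hfm hper
  obtain ⟨x, hx⟩ := hne
  obtain ⟨z, hz, -⟩ := exists_mem_frontier_lt hm hfm hU hvol hx
  obtain ⟨u, hu, hu_min⟩ := exists_min_image (frontier U) id hfin ⟨z, hz⟩
  obtain ⟨w, hw, hw_max⟩ := exists_max_image (frontier U) id hfin ⟨z, hz⟩
  refine ⟨u, hu, w, hw, fun y hy => ⟨?_, ?_⟩⟩
  · obtain ⟨z, hz, hzy⟩ := exists_mem_frontier_lt hm hfm hU hvol hy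
    exact (hu_min z hz).trans_lt hzy
  · obtain ⟨z, hz, hyz⟩ := exists_mem_frontier_gt hm hfm hU hvol hy
    exact hyz.trans_le (hw_max z hz)

lemma eq_Ioo_of_frontier_subset {u w : ℝ} (hU : IsOpen U) (hne : U.Nonempty)
    (hsub : U ⊆ Ioo u w) (hfr : frontier U ⊆ {u, w}) : U = Ioo u w := by
  refine hsub.antisymm (isPreconnected_Ioo.subset_of_disjoint_frontier hU
    (disjoint_left.mpr fun z hz hzU => ?_) (hne.mono fun x hx => ⟨hsub hx, hx⟩))
  rcases hfr hzU with rfl | rfl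
  exacts [lt_irrefl _ hz.1, lt_irrefl _ hz.2]

/-- An open set other than `(u, w)` has a third frontier point, which costs at least `m`. -/
lemma exists_Ioo_superset_le_wper (hm : 0 < m) (hfm : ∀ x, m ≤ f x) (hU : IsOpen U)
    (hne : U.Nonempty) (hvol : wvol f U ≠ ⊤) (hper : wper f U ≠ ⊤) :
    ∃ u w, u < w ∧ U ⊆ Ioo u w ∧ ENNReal.ofReal (f u + f w) ≤ wper f U ∧
      (U ≠ Ioo u w → ENNReal.ofReal (f u + f w + m) ≤ wper f U) := by
  have hnn : ∀ x, 0 ≤ f x := fun x => hm.le.trans (hfm x)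
  obtain ⟨u, hu, w, hw, hsub⟩ := exists_mem_frontier_subset_Ioo hm hfm hU hne hvol hper
  obtain ⟨x, hx⟩ := hne
  have huw : u < w := (hsub hx).1.trans (hsub hx).2
  refine ⟨u, w, huw, hsub, ?_, fun hUne => ?_⟩
  · have := sum_le_wper (U := U) f {u, w} (by simp [insert_subset_iff, hu, hw])
    rwa [Finset.sum_pair huw.ne, ← ENNReal.ofReal_add (hnn u) (hnn w)] at this
  · obtain ⟨z, hz, hzuw⟩ : ∃ z ∈ frontier U, z ≠ u ∧ z ≠ w := by
      by_contra! h
      exact hUne (eq_Ioo_of_frontier_subset hU ⟨x, hx⟩ hsub fun z hz =>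
        (em (z = u)).imp id (h z hz))
    have := sum_le_wper (U := U) f {z, u, w} (by simp [insert_subset_iff, hz, hu, hw])
    rw [Finset.sum_insert (by simp [hzuw.1, hzuw.2]), Finset.sum_pair huw.ne,
      ← ENNReal.ofReal_add (hnn u) (hnn w),
      ← ENNReal.ofReal_add (hnn z) (add_nonneg (hnn u) (hnn w)), add_comm] at this
    exact (ENNReal.ofReal_le_ofReal (by linarith [hfm z])).trans this

end LowerBound

noncomputable def wprim (f : ℝ → ℝ) (t : ℝ) : ℝ :=
  ∫ x in (0 : ℝ)..t, f x

section Primitive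

variable {f : ℝ → ℝ} {m V : ℝ}

lemma wprim_sub_wprim (hcont : Continuous f) (a b : ℝ) :
    wprim f b - wprim f a = ∫ x in a..b, f x :=
  intervalIntegral.integral_interval_sub_left (hcont.intervalIntegrable _ _)
    (hcont.intervalIntegrable _ _)

lemma continuous_wprim (hcont : Continuous f) : Continuous (wprim f) :=
  intervalIntegral.continuous_primitive (fun a b => hcont.intervalIntegrable a b) 0

lemma monotone_wprim (hcont : Continuous f) (hnn : ∀ x, 0 ≤ f x) : Monotone (wprim f) :=
  fun a b hab => sub_nonneg.mp <| wprim_sub_wprim hcont a b ▸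
    intervalIntegral.integral_nonneg hab fun x _ => hnn x

lemma strictMono_wprim (hcont : Continuous f) (hpos : ∀ x, 0 < f x) : StrictMono (wprim f) :=
  fun a b hab => sub_pos.mp <| wprim_sub_wprim hcont a b ▸
    intervalIntegral.intervalIntegral_pos_of_pos (hcont.intervalIntegrable _ _) hpos hab

lemma mul_sub_le_wprim_sub (hcont : Continuous f) (hfm : ∀ x, m ≤ f x) {a b : ℝ} (hab : a ≤ b) :
    m * (b - a) ≤ wprim f b - wprim f a := by
  rw [wprim_sub_wprim hcont, mul_comm, ← smul_eq_mul, ← intervalIntegral.integral_const]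
  exact intervalIntegral.integral_mono_on hab intervalIntegrable_const
    (hcont.intervalIntegrable _ _) fun x _ => hfm x

lemma surjective_wprim (hcont : Continuous f) (hm : 0 < m) (hfm : ∀ x, m ≤ f x) :
    Function.Surjective (wprim f) := by
  have h0 : wprim f 0 = 0 := intervalIntegral.integral_same
  refine (continuous_wprim hcont).surjective ?_ ?_
  · refine tendsto_atTop_mono' _ ?_ (tendsto_id.const_mul_atTop hm)
    filter_upwards [eventually_ge_atTop 0] with t ht
    simpa [h0] using mul_sub_le_wprim_sub hcont hfm ht
  · refine tendsto_atBot_mono' _ ?_ (tendsto_id.const_mul_atBot hm)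
    filter_upwards [eventually_le_atBot 0] with t ht
    have := mul_sub_le_wprim_sub hcont hfm ht
    simp only [h0, zero_sub, mul_neg] at this
    simpa using neg_le_neg_iff.mp this

lemma wvol_Ioo (hcont : Continuous f) (hnn : ∀ x, 0 ≤ f x) {a b : ℝ} (hab : a ≤ b) :
    wvol f (Ioo a b) = ENNReal.ofReal (wprim f b - wprim f a) := by
  rw [wvol, Measure.restrict_congr_set Ioo_ae_eq_Ioc,
    ← ofReal_integral_eq_lintegral_ofReal hcont.integrableOn_Ioc (Eventually.of_forall hnn),
    wprim_sub_wprim hcont, intervalIntegral.integral_of_le hab]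

lemma wvol_Ioo_eq_ofReal_iff (hcont : Continuous f) (hnn : ∀ x, 0 ≤ f x) (hV : 0 < V)
    {a b : ℝ} : wvol f (Ioo a b) = ENNReal.ofReal V ↔ wprim f b - wprim f a = V := by
  rcases le_total a b with hab | hba
  · rw [wvol_Ioo hcont hnn hab, ENNReal.ofReal_eq_ofReal_iff
      (sub_nonneg.mpr (monotone_wprim hcont hnn hab)) hV.le]
  · have : wprim f b - wprim f a ≤ 0 := sub_nonpos.mpr (monotone_wprim hcont hnn hba)
    rw [Ioo_eq_empty hba.not_gt, wvol_empty]
    exact iff_of_false (ENNReal.ofReal_pos.mpr hV).ne (by linarith)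

lemma le_wprim_sub_of_subset_Ioo (hcont : Continuous f) (hnn : ∀ x, 0 ≤ f x) {U : Set ℝ}
    {u w : ℝ} (huw : u ≤ w) (hsub : U ⊆ Ioo u w) (hvol : wvol f U = ENNReal.ofReal V) :
    V ≤ wprim f w - wprim f u := by
  have := hvol ▸ wvol_mono f hsub
  rwa [wvol_Ioo hcont hnn huw, ENNReal.ofReal_le_ofReal_iff
    (sub_nonneg.mpr (monotone_wprim hcont hnn huw))] at this

end Primitive

section OptimalInterval

variable {f : ℝ → ℝ} {m V p q : ℝ}

lemma lt_of_wprim_sub_eq (hcont : Continuous f) (hnn : ∀ x, 0 ≤ f x) (hV : 0 < V) {a b : ℝ}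
    (h : wprim f b - wprim f a = V) : a < b :=
  (monotone_wprim hcont hnn).reflect_lt (by linarith)

lemma ofReal_le_wper_of_wvol_eq (hcont : Continuous f) (hm : 0 < m) (hfm : ∀ x, m ≤ f x)
    (hV : 0 < V) (hopt : ∀ u w, V ≤ wprim f w - wprim f u → f p + f q ≤ f u + f w)
    {U : Set ℝ} (hU : IsOpen U) (hvol : wvol f U = ENNReal.ofReal V) :
    ENNReal.ofReal (f p + f q) ≤ wper f U := by
  by_cases hper : wper f U = ⊤
  · exact hper ▸ le_top
  obtain ⟨u, w, huw, hsub, hle, -⟩ := exists_Ioo_superset_le_wper hm hfm hU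
    (nonempty_of_wvol_eq hV hvol) (hvol ▸ ENNReal.ofReal_ne_top) hper
  have hnn : ∀ x, 0 ≤ f x := fun x => hm.le.trans (hfm x)
  exact (ENNReal.ofReal_le_ofReal
    (hopt u w (le_wprim_sub_of_subset_Ioo hcont hnn huw.le hsub hvol))).trans hle

lemma isIsopRegion_Ioo (hcont : Continuous f) (hm : 0 < m) (hfm : ∀ x, m ≤ f x) (hV : 0 < V)
    (hpqV : wprim f q - wprim f p = V)
    (hopt : ∀ u w, V ≤ wprim f w - wprim f u → f p + f q ≤ f u + f w) :
    IsIsopRegion f (Ioo p q) (ENNReal.ofReal V) := by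
  have hnn : ∀ x, 0 ≤ f x := fun x => hm.le.trans (hfm x)
  refine ⟨isOpen_Ioo, (wvol_Ioo_eq_ofReal_iff hcont hnn hV).2 hpqV, fun U hU hvol => ?_⟩
  rw [wper_Ioo hnn (lt_of_wprim_sub_eq hcont hnn hV hpqV)]
  exact ofReal_le_wper_of_wvol_eq hcont hm hfm hV hopt hU hvol

lemma IsIsopRegion.exists_eq_Ioo (hcont : Continuous f) (hm : 0 < m) (hfm : ∀ x, m ≤ f x)
    (hV : 0 < V) (hpqV : wprim f q - wprim f p = V)
    (hopt : ∀ u w, V ≤ wprim f w - wprim f u → f p + f q ≤ f u + f w) {Ω : Set ℝ}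
    (hΩ : IsIsopRegion f Ω (ENNReal.ofReal V)) : ∃ u w, u < w ∧ Ω = Ioo u w := by
  have hnn : ∀ x, 0 ≤ f x := fun x => hm.le.trans (hfm x)
  have hper : wper f Ω ≤ ENNReal.ofReal (f p + f q) :=
    (hΩ.2.2 _ isOpen_Ioo ((wvol_Ioo_eq_ofReal_iff hcont hnn hV).2 hpqV)).trans_eq
      (wper_Ioo hnn (lt_of_wprim_sub_eq hcont hnn hV hpqV))
  obtain ⟨u, w, huw, hsub, -, hthird⟩ := exists_Ioo_superset_le_wper hm hfm hΩ.1
    (nonempty_of_wvol_eq hV hΩ.2.1) (hΩ.2.1 ▸ ENNReal.ofReal_ne_top)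
    (ne_top_of_le_ne_top ENNReal.ofReal_ne_top hper)
  refine ⟨u, w, huw, not_not.mp fun hne => ?_⟩
  have hpq := hopt u w (le_wprim_sub_of_subset_Ioo hcont hnn huw.le hsub hΩ.2.1)
  have hcost := (hthird hne).trans hper
  rw [ENNReal.ofReal_le_ofReal_iff (add_nonneg (hnn p) (hnn q))] at hcost
  linarith

lemma IsIsopRegion.add_le_of_wprim_sub_eq (hcont : Continuous f) (hnn : ∀ x, 0 ≤ f x)
    (hV : 0 < V) {u w : ℝ} (huw : u < w) (hΩ : IsIsopRegion f (Ioo u w) (ENNReal.ofReal V))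
    {α β : ℝ} (hαβ : wprim f β - wprim f α = V) : f u + f w ≤ f α + f β := by
  have := hΩ.2.2 _ isOpen_Ioo ((wvol_Ioo_eq_ofReal_iff hcont hnn hV).2 hαβ)
  rwa [wper_Ioo hnn huw, wper_Ioo hnn (lt_of_wprim_sub_eq hcont hnn hV hαβ),
    ENNReal.ofReal_le_ofReal_iff (add_nonneg (hnn α) (hnn β))] at this

end OptimalInterval

section DecreasingIncreasing

variable {f : ℝ → ℝ} {x₀ V : ℝ}

lemma le_of_antitoneOn_of_monotoneOn (hanti : AntitoneOn f (Iic x₀))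
    (hmono : MonotoneOn f (Ici x₀)) (y : ℝ) : f x₀ ≤ f y := by
  rcases le_total y x₀ with h | h
  · exact hanti h self_mem_Iic h
  · exact hmono self_mem_Ici h h

lemma exists_interval_from_min (hG : StrictMono (wprim f)) (hsurj : Function.Surjective (wprim f))
    (hmono : MonotoneOn f (Ici x₀)) (hV : 0 ≤ V) {w : ℝ} (hw : wprim f x₀ + V ≤ wprim f w) :
    ∃ β, x₀ ≤ β ∧ wprim f β - wprim f x₀ = V ∧ f β ≤ f w := by
  obtain ⟨β, hβ⟩ := hsurj (wprim f x₀ + V)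
  have hx₀β : x₀ ≤ β := hG.le_iff_le.mp (by linarith)
  have hβw : β ≤ w := hG.le_iff_le.mp (by linarith)
  exact ⟨β, hx₀β, by linarith, hmono hx₀β (hx₀β.trans hβw) hβw⟩

lemma exists_interval_to_min (hG : StrictMono (wprim f)) (hsurj : Function.Surjective (wprim f))
    (hanti : AntitoneOn f (Iic x₀)) (hV : 0 ≤ V) {u : ℝ} (hu : wprim f u ≤ wprim f x₀ - V) :
    ∃ α, α ≤ x₀ ∧ wprim f x₀ - wprim f α = V ∧ f α ≤ f u := by
  obtain ⟨α, hα⟩ := hsurj (wprim f x₀ - V)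
  have hαx₀ : α ≤ x₀ := hG.le_iff_le.mp (by linarith)
  have huα : u ≤ α := hG.le_iff_le.mp (by linarith)
  exact ⟨α, hαx₀, by linarith, hanti (huα.trans hαx₀) hαx₀ huα⟩

lemma exists_interval_through_min_le (hG : StrictMono (wprim f))
    (hsurj : Function.Surjective (wprim f)) (hanti : AntitoneOn f (Iic x₀))
    (hmono : MonotoneOn f (Ici x₀)) (hV : 0 ≤ V) {u w : ℝ} (huw : V ≤ wprim f w - wprim f u) :
    ∃ α β, α ≤ x₀ ∧ x₀ ≤ β ∧ wprim f β - wprim f α = V ∧ f α + f β ≤ f u + f w := by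
  have hmin := le_of_antitoneOn_of_monotoneOn hanti hmono
  by_cases hright : wprim f x₀ + V ≤ wprim f w
  · obtain ⟨β, hx₀β, hβ, hfβ⟩ := exists_interval_from_min hG hsurj hmono hV hright
    exact ⟨x₀, β, le_rfl, hx₀β, hβ, add_le_add (hmin u) hfβ⟩
  by_cases hleft : wprim f u ≤ wprim f x₀ - V
  · obtain ⟨α, hαx₀, hα, hfα⟩ := exists_interval_to_min hG hsurj hanti hV hleft
    exact ⟨α, x₀, hαx₀, le_rfl, hα, add_le_add hfα (hmin w)⟩
  obtain ⟨β, hβ⟩ := hsurj (wprim f u + V)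
  have hux₀ : u ≤ x₀ := hG.le_iff_le.mp (by linarith)
  have hx₀β : x₀ ≤ β := hG.le_iff_le.mp (by linarith)
  have hβw : β ≤ w := hG.le_iff_le.mp (by linarith)
  exact ⟨u, β, hux₀, hx₀β, by linarith, by linarith [hmono hx₀β (hx₀β.trans hβw) hβw]⟩

lemma exists_wprim_sub_eq_forall_add_le (hcont : Continuous f) (hG : StrictMono (wprim f))
    (hsurj : Function.Surjective (wprim f)) (hanti : AntitoneOn f (Iic x₀))
    (hmono : MonotoneOn f (Ici x₀)) (hV : 0 ≤ V) :
    ∃ p q, wprim f q - wprim f p = V ∧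
      ∀ u w, V ≤ wprim f w - wprim f u → f p + f q ≤ f u + f w := by
  set C : Set (ℝ × ℝ) := {r | r.1 ≤ x₀ ∧ x₀ ≤ r.2 ∧ wprim f r.2 - wprim f r.1 = V}
  obtain ⟨a, ha⟩ := hsurj (wprim f x₀ - V)
  obtain ⟨b, hb⟩ := hsurj (wprim f x₀ + V)
  have hCsub : C ⊆ Icc a x₀ ×ˢ Icc x₀ b := fun r ⟨h1, h2, h3⟩ =>
    ⟨⟨hG.le_iff_le.mp (by linarith [hG.monotone h2]), h1⟩,
      h2, hG.le_iff_le.mp (by linarith [hG.monotone h1])⟩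
  have hCclosed : IsClosed C :=
    (isClosed_le continuous_fst continuous_const).inter
      ((isClosed_le continuous_const continuous_snd).inter
        (isClosed_eq (((continuous_wprim hcont).comp continuous_snd).sub
          ((continuous_wprim hcont).comp continuous_fst)) continuous_const))
  have hCne : C.Nonempty := ⟨(a, x₀), hG.le_iff_le.mp (by linarith), le_rfl, by simp [ha]⟩
  obtain ⟨⟨p, q⟩, ⟨-, -, hpq⟩, hmin⟩ :=
    ((isCompact_Icc.prod isCompact_Icc).of_isClosed_subset hCclosed hCsub).exists_isMinOn hCne
      (by fun_prop : Continuous fun r : ℝ × ℝ => f r.1 + f r.2).continuousOn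
  refine ⟨p, q, hpq, fun u w huw => ?_⟩
  obtain ⟨α, β, hα, hβ, hαβ, hle⟩ := exists_interval_through_min_le hG hsurj hanti hmono hV huw
  exact (isMinOn_iff.mp hmin (α, β) ⟨hα, hβ, hαβ⟩).trans hle

lemma exists_mem_Icc_le_of_forall_add_le (hG : StrictMono (wprim f))
    (hsurj : Function.Surjective (wprim f)) (hanti : AntitoneOn f (Iic x₀))
    (hmono : MonotoneOn f (Ici x₀)) {u w : ℝ} (huw : u ≤ w)
    (hle : ∀ α β, wprim f β - wprim f α = wprim f w - wprim f u → f u + f w ≤ f α + f β) :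
    ∃ c ∈ Icc u w, f c ≤ f x₀ := by
  have hV : 0 ≤ wprim f w - wprim f u := sub_nonneg.mpr (hG.monotone huw)
  rcases lt_or_ge x₀ u with hx₀u | hux₀
  · obtain ⟨β, -, hβ, hfβ⟩ :=
      exists_interval_from_min hG hsurj hmono hV (w := w) (by linarith [hG hx₀u])
    exact ⟨u, left_mem_Icc.mpr huw, by linarith [hle x₀ β hβ]⟩
  rcases lt_or_ge w x₀ with hwx₀ | hx₀w
  · obtain ⟨α, -, hα, hfα⟩ :=
      exists_interval_to_min hG hsurj hanti hV (u := u) (by linarith [hG hwx₀])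
    exact ⟨w, right_mem_Icc.mpr huw, by linarith [hle α x₀ hα]⟩
  exact ⟨x₀, ⟨hux₀, hx₀w⟩, le_rfl⟩

end DecreasingIncreasing

/-- For a decreasing-increasing density on `ℝ` (nonincreasing on
`(−∞, x₀]` and nondecreasing on `[x₀, +∞)`), isoperimetric regions of any volume
`V > 0` exist and every minimizer is a bounded open interval in whose closure `f`
attains its global minimum. -/
theorem minimizers_decreasing_increasing_density
    (f : ℝ → ℝ) (hcont : Continuous f) (hpos : ∀ x, 0 < f x) (x₀ : ℝ)
    (hanti : ∀ x y : ℝ, x ≤ y → y ≤ x₀ → f y ≤ f x)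
    (hmono : ∀ x y : ℝ, x₀ ≤ x → x ≤ y → f x ≤ f y)
    (V : ℝ) (hV : 0 < V) :
    (∃ Ω : Set ℝ, IsIsopRegion f Ω (ENNReal.ofReal V)) ∧
    ∀ Ω : Set ℝ, IsIsopRegion f Ω (ENNReal.ofReal V) →
      ∃ a b : ℝ, a < b ∧ Ω = Set.Ioo a b ∧
        ∃ c ∈ Set.Icc a b, ∀ y : ℝ, f c ≤ f y := by
  have hantiOn : AntitoneOn f (Iic x₀) := fun x _ y hy hxy => hanti x y hxy hy
  have hmonoOn : MonotoneOn f (Ici x₀) := fun x hx y _ hxy => hmono x y hx hxy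
  have hmin := le_of_antitoneOn_of_monotoneOn hantiOn hmonoOn
  have hnn : ∀ x, 0 ≤ f x := fun x => (hpos x).le
  have hG := strictMono_wprim hcont hpos
  have hsurj := surjective_wprim hcont (hpos x₀) hmin
  obtain ⟨p, q, hpqV, hopt⟩ :=
    exists_wprim_sub_eq_forall_add_le hcont hG hsurj hantiOn hmonoOn hV.le
  refine ⟨⟨_, isIsopRegion_Ioo hcont (hpos x₀) hmin hV hpqV hopt⟩, fun Ω hΩ => ?_⟩
  obtain ⟨u, w, huw, rfl⟩ := hΩ.exists_eq_Ioo hcont (hpos x₀) hmin hV hpqV hopt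
  have huwV := (wvol_Ioo_eq_ofReal_iff hcont hnn hV).1 hΩ.2.1
  obtain ⟨c, hc, hfc⟩ := exists_mem_Icc_le_of_forall_add_le hG hsurj hantiOn hmonoOn huw.le
    fun α β hαβ => hΩ.add_le_of_wprim_sub_eq hcont hnn hV huw (hαβ.trans huwV)
  exact ⟨u, w, huw, rfl, c, hc, fun y => hfc.trans (hmin y)⟩
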